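/- Let K be a differential field of characteristic 0 and A ∈ M_n(K((∂^{-1}))) a matrix pseudodifferential operator with adjoint A*. If det(A) = 0 then det(A*) = 0, and if det(A) ≠ 0 then det(A*) = (-1)^{d(A)} det(A), where d(A) is the degree of det(A). -/

import Mathlib

/-- The ring of differential operators K[∂] over a differential field (K, d),
characterized abstractly. -/
structure DiffOpRing (K : Type) [Field K] (d : K → K) (R : Type) [Ring R] where
  ι : K →+* R
  dop : R
  comm : ∀ a : K, dop * ι a = ι a * dop + ι (d a)
  repr : ∀ r : R, ∃! c : ℕ →₀ K, r = c.sum fun i a => ι a * dop ^ i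

/-- The coefficients of a differential operator. -/
noncomputable def DiffOpRing.coeff {K : Type} [Field K] {d : K → K} {R : Type} [Ring R]
    (S : DiffOpRing K d R) (r : R) : ℕ →₀ K := (S.repr r).choose

/-- The order of a differential operator. -/
noncomputable def DiffOpRing.ord {K : Type} [Field K] {d : K → K} {R : Type} [Ring R]
    (S : DiffOpRing K d R) (r : R) : ℕ := (S.coeff r).support.sup id

/-- The leading coefficient of a differential operator. -/
noncomputable def DiffOpRing.lead {K : Type} [Field K] {d : K → K} {R : Type} [Ring R]
    (S : DiffOpRing K d R) (r : R) : K := (S.coeff r) (S.ord r)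

/-- The formal adjoint of a differential operator: (Σ a_i ∂^i)* = Σ (-∂)^i ∘ a_i. -/
noncomputable def DiffOpRing.adj {K : Type} [Field K] {d : K → K} {R : Type} [Ring R]
    (S : DiffOpRing K d R) (r : R) : R :=
  (S.coeff r).sum fun i a => (-S.dop) ^ i * S.ι a

/-- The adjoint of a matrix differential operator: (A*)_{ij} = (A_{ji})*. -/
noncomputable def adjM {K : Type} [Field K] {d : K → K} {R : Type} [Ring R]
    (S : DiffOpRing K d R) {n : ℕ} (A : Matrix (Fin n) (Fin n) R) :
    Matrix (Fin n) (Fin n) R :=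
  Matrix.of fun i j => S.adj (A j i)

/-- A matrix differential operator is non-degenerate (non-zero Dieudonné determinant)
iff it has trivial right kernel over K[∂]. -/
def Nondeg {n : ℕ} {R : Type} [Ring R] (A : Matrix (Fin n) (Fin n) R) : Prop :=
  ∀ X : Fin n → R, A.mulVec X = 0 → X = 0

/-!
`K[∂]` carries an order with multiplicative leading coefficients, so it is a domain with left and
right division with remainder, and hence satisfies the Ore condition. Euclid's algorithm on the
first column (row operations by transvections) followed by splitting off a `1 × 1` block, whose
complement stays nondegenerate by the Ore condition, writes every nondegenerate matrix as a product
of triangular matrices with nonzero diagonal. The adjoint is an anti-automorphism that exchanges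
upper and lower triangular matrices and, on each diagonal entry, keeps the order and multiplies the
leading coefficient by `(-1)^order`; conjugating by the reversal permutation shows that `det₁` and
`deg` are also computed from the diagonal on lower triangular matrices. Multiplicativity then gives
`det₁ A* = (-1)^deg A · det₁ A` and `deg A* = deg A` for nondegenerate `A`, and `A** = A` handles
the degenerate case.
-/

namespace DiffOpRing

variable {K : Type} [Field K] {d : K → K} {R : Type} [Ring R] (S : DiffOpRing K d R)

/-! ### Order and leading terms -/

noncomputable def ofCoeff (c : ℕ →₀ K) : R := c.sum fun i a => S.ι a * S.dop ^ i

theorem ofCoeff_coeff (r : R) : S.ofCoeff (S.coeff r) = r := (S.repr r).choose_spec.1.symm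

theorem coeff_eq_of_ofCoeff_eq {c : ℕ →₀ K} {r : R} (h : S.ofCoeff c = r) : S.coeff r = c :=
  ((S.repr r).choose_spec.2 c h.symm).symm

theorem coeff_add (r s : R) : S.coeff (r + s) = S.coeff r + S.coeff s := by
  refine S.coeff_eq_of_ofCoeff_eq ?_
  rw [ofCoeff, Finsupp.sum_add_index' (fun _ => by simp) (fun _ _ _ => by rw [map_add, add_mul])]
  exact congr_arg₂ (· + ·) (S.ofCoeff_coeff r) (S.ofCoeff_coeff s)

noncomputable def coeffHom : R →+ ℕ →₀ K := AddMonoidHom.mk' S.coeff S.coeff_add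

theorem coeff_zero : S.coeff 0 = 0 := map_zero S.coeffHom

theorem coeff_neg (r : R) : S.coeff (-r) = -S.coeff r := map_neg S.coeffHom r

theorem coeff_sub (r s : R) : S.coeff (r - s) = S.coeff r - S.coeff s := map_sub S.coeffHom r s

theorem coeff_monomial (i : ℕ) (a : K) : S.coeff (S.ι a * S.dop ^ i) = Finsupp.single i a :=
  S.coeff_eq_of_ofCoeff_eq (Finsupp.sum_single_index (by simp))

theorem coeff_injective : Function.Injective S.coeff := fun r s h => by
  rw [← S.ofCoeff_coeff r, h, S.ofCoeff_coeff]

theorem lead_ne_zero {r : R} (hr : r ≠ 0) : S.lead r ≠ 0 := by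
  have hne : (S.coeff r).support.Nonempty :=
    Finsupp.support_nonempty_iff.mpr fun h => hr (S.coeff_injective (h.trans S.coeff_zero.symm))
  obtain ⟨i, hi, hsup⟩ := Finset.exists_mem_eq_sup _ hne id
  rw [lead, ord, hsup]
  exact Finsupp.mem_support_iff.mp hi

theorem coeff_eq_zero_of_ord_lt {r : R} {j : ℕ} (h : S.ord r < j) : S.coeff r j = 0 :=
  Finsupp.notMem_support_iff.mp fun hj => h.not_ge (Finset.le_sup (f := id) hj)

/-- The operators of order `< k`, zero included. -/
def ordLT (k : ℕ) : AddSubgroup R where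
  carrier := {r | ∀ j, k ≤ j → S.coeff r j = 0}
  add_mem' {r s} hr hs j hj := by simp [S.coeff_add, hr j hj, hs j hj]
  zero_mem' j _ := by simp [S.coeff_zero]
  neg_mem' {r} hr j hj := by simp [S.coeff_neg, hr j hj]

theorem ordLT_mono {k l : ℕ} (h : k ≤ l) : S.ordLT k ≤ S.ordLT l :=
  fun _ hr j hj => hr j (h.trans hj)

theorem monomial_mem_ordLT {i k : ℕ} (h : i < k) (a : K) : S.ι a * S.dop ^ i ∈ S.ordLT k :=
  fun j hj => by rw [coeff_monomial, Finsupp.single_eq_of_ne (by omega)]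

theorem eq_sum_of_mem_ordLT {r : R} {k : ℕ} (hr : r ∈ S.ordLT k) :
    r = ∑ i ∈ Finset.range k, S.ι (S.coeff r i) * S.dop ^ i := by
  conv_lhs => rw [← S.ofCoeff_coeff r]
  refine Finsupp.sum_of_support_subset _ (fun i hi => ?_) _ (fun i _ => by simp)
  by_contra h
  exact Finsupp.mem_support_iff.mp hi (hr i (by simpa using h))

def HasLeadingTerm (r : R) (a : K) (n : ℕ) : Prop := r - S.ι a * S.dop ^ n ∈ S.ordLT n

variable {S}

theorem HasLeadingTerm.coeff_eq {r : R} {a : K} {n j : ℕ} (h : S.HasLeadingTerm r a n)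
    (hj : n ≤ j) : S.coeff r j = Finsupp.single n a j := by
  have := h j hj
  rwa [coeff_sub, Finsupp.sub_apply, coeff_monomial, sub_eq_zero] at this

theorem HasLeadingTerm.ne_zero {r : R} {a : K} {n : ℕ} (h : S.HasLeadingTerm r a n)
    (ha : a ≠ 0) : r ≠ 0 := by
  rintro rfl
  have := h.coeff_eq le_rfl
  rw [coeff_zero, Finsupp.single_eq_same] at this
  exact ha this.symm

theorem HasLeadingTerm.ord_eq {r : R} {a : K} {n : ℕ} (h : S.HasLeadingTerm r a n)
    (ha : a ≠ 0) : S.ord r = n := by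
  refine le_antisymm (Finset.sup_le fun i hi => ?_) (Finset.le_sup (f := id) ?_)
  · by_contra hlt
    rw [id, not_le] at hlt
    rw [Finsupp.mem_support_iff, h.coeff_eq (by omega), Finsupp.single_eq_of_ne (by omega)] at hi
    exact hi rfl
  · rw [Finsupp.mem_support_iff, h.coeff_eq le_rfl, Finsupp.single_eq_same]
    exact ha

theorem HasLeadingTerm.lead_eq {r : R} {a : K} {n : ℕ} (h : S.HasLeadingTerm r a n)
    (ha : a ≠ 0) : S.lead r = a := by
  rw [lead, h.ord_eq ha, h.coeff_eq le_rfl, Finsupp.single_eq_same]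

theorem HasLeadingTerm.mem_ordLT_succ {r : R} {a : K} {n : ℕ} (h : S.HasLeadingTerm r a n) :
    r ∈ S.ordLT (n + 1) := by
  simpa using add_mem (S.ordLT_mono n.le_succ h) (S.monomial_mem_ordLT n.lt_succ_self a)

theorem HasLeadingTerm.add_of_mem {r s : R} {a : K} {n : ℕ} (h : S.HasLeadingTerm r a n)
    (hs : s ∈ S.ordLT n) : S.HasLeadingTerm (r + s) a n := by
  simpa [HasLeadingTerm, add_sub_right_comm] using add_mem h hs

variable (S)

theorem hasLeadingTerm_monomial (a : K) (n : ℕ) : S.HasLeadingTerm (S.ι a * S.dop ^ n) a n := by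
  simp [HasLeadingTerm, zero_mem]

theorem hasLeadingTerm_lead_ord (r : R) : S.HasLeadingTerm r (S.lead r) (S.ord r) := by
  intro j hj
  rw [coeff_sub, Finsupp.sub_apply, coeff_monomial]
  rcases hj.eq_or_lt with rfl | hlt
  · rw [Finsupp.single_eq_same, lead, sub_self]
  · rw [S.coeff_eq_zero_of_ord_lt hlt, Finsupp.single_eq_of_ne (by omega), sub_self]

theorem mem_ordLT_iff {r : R} (hr : r ≠ 0) {k : ℕ} : r ∈ S.ordLT k ↔ S.ord r < k := by
  refine ⟨fun h => ?_, fun h => ?_⟩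
  · by_contra hle
    exact S.lead_ne_zero hr (h _ (not_lt.mp hle))
  · simpa using add_mem (S.ordLT_mono h.le (S.hasLeadingTerm_lead_ord r))
      (S.monomial_mem_ordLT h (S.lead r))

theorem hasLeadingTerm_monomial_mul_monomial (i : ℕ) : ∀ (a b : K) (j : ℕ),
    S.HasLeadingTerm (S.ι a * S.dop ^ i * (S.ι b * S.dop ^ j)) (a * b) (i + j) := by
  induction i with
  | zero =>
    intro a b j
    simpa [← mul_assoc] using S.hasLeadingTerm_monomial (a * b) j
  | succ i ih =>
    intro a b j
    have e : S.ι a * S.dop ^ (i + 1) * (S.ι b * S.dop ^ j) =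
        S.ι a * S.dop ^ i * (S.ι b * S.dop ^ (j + 1)) +
          S.ι a * S.dop ^ i * (S.ι (d b) * S.dop ^ j) :=
      calc _ = S.ι a * S.dop ^ i * (S.dop * S.ι b) * S.dop ^ j := by noncomm_ring
        _ = S.ι a * S.dop ^ i * (S.ι b * S.dop + S.ι (d b)) * S.dop ^ j := by rw [S.comm]
        _ = _ := by rw [pow_succ']; simp only [mul_add, add_mul, mul_assoc]
    rw [e, show i + 1 + j = i + (j + 1) by omega]
    refine (ih a b (j + 1)).add_of_mem ?_
    simpa only [← add_assoc] using (ih a (d b) j).mem_ordLT_succ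

theorem mul_mem_ordLT {r s : R} {k l : ℕ} (hr : r ∈ S.ordLT k) (hs : s ∈ S.ordLT l) :
    r * s ∈ S.ordLT (k + l - 1) := by
  rw [S.eq_sum_of_mem_ordLT hr, S.eq_sum_of_mem_ordLT hs, Finset.sum_mul_sum]
  refine sum_mem fun i hi => sum_mem fun j hj => ?_
  rw [Finset.mem_range] at hi hj
  exact S.ordLT_mono (by omega) (S.hasLeadingTerm_monomial_mul_monomial i _ _ j).mem_ordLT_succ

variable {S} in
theorem HasLeadingTerm.mul {r s : R} {a b : K} {n m : ℕ} (hr : S.HasLeadingTerm r a n)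
    (hs : S.HasLeadingTerm s b m) : S.HasLeadingTerm (r * s) (a * b) (n + m) := by
  have e : r * s = S.ι a * S.dop ^ n * (S.ι b * S.dop ^ m) +
      (S.ι a * S.dop ^ n * (s - S.ι b * S.dop ^ m) + (r - S.ι a * S.dop ^ n) * s) := by
    noncomm_ring
  rw [e]
  refine (S.hasLeadingTerm_monomial_mul_monomial n a b m).add_of_mem (add_mem ?_ ?_)
  · have := S.mul_mem_ordLT (S.monomial_mem_ordLT n.lt_succ_self a) hs
    rwa [show n + 1 + m - 1 = n + m by omega] at this
  · have := S.mul_mem_ordLT hr hs.mem_ordLT_succ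
    rwa [show n + (m + 1) - 1 = n + m by omega] at this

theorem hasLeadingTerm_mul (r s : R) :
    S.HasLeadingTerm (r * s) (S.lead r * S.lead s) (S.ord r + S.ord s) :=
  (S.hasLeadingTerm_lead_ord r).mul (S.hasLeadingTerm_lead_ord s)

include S in
theorem isDomain : IsDomain R :=
  have : Nontrivial R :=
    ⟨1, 0, by simpa using (S.hasLeadingTerm_monomial 1 0).ne_zero one_ne_zero⟩
  have : NoZeroDivisors R := ⟨fun {r s} h => by
    by_contra! hrs
    exact (S.hasLeadingTerm_mul r s).ne_zero
      (mul_ne_zero (S.lead_ne_zero hrs.1) (S.lead_ne_zero hrs.2)) h⟩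
  NoZeroDivisors.to_isDomain R

theorem lead_one : S.lead 1 = 1 := by
  simpa using (S.hasLeadingTerm_monomial 1 0).lead_eq one_ne_zero

theorem ord_one : S.ord 1 = 0 := by
  simpa using (S.hasLeadingTerm_monomial 1 0).ord_eq one_ne_zero

/-- Left and right division with remainder are the cases `φ = (· * b)` and `φ = (b * ·)`. -/
theorem exists_sub_mem_ordLT (φ : R →+ R) (n : ℕ)
    (hφ : ∀ a : R, a ≠ 0 → n ≤ S.ord a → ∃ q, S.HasLeadingTerm (φ q) (S.lead a) (S.ord a))
    (a : R) : ∃ q, a - φ q ∈ S.ordLT n := by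
  suffices h : ∀ N, ∀ a ∈ S.ordLT N, ∃ q, a - φ q ∈ S.ordLT n from
    h _ a (S.hasLeadingTerm_lead_ord a).mem_ordLT_succ
  intro N
  induction N with
  | zero => exact fun a ha => ⟨0, by simpa using S.ordLT_mono (Nat.zero_le n) ha⟩
  | succ N ih =>
    intro a ha
    by_cases haN : a ∈ S.ordLT N
    · exact ih a haN
    by_cases hnN : N < n
    · exact ⟨0, by simpa using S.ordLT_mono hnN ha⟩
    have ha0 : a ≠ 0 := fun h => haN (h ▸ zero_mem _)
    have hord : S.ord a = N := by rw [S.mem_ordLT_iff ha0] at ha haN; omega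
    obtain ⟨q₀, hq₀⟩ := hφ a ha0 (by omega)
    obtain ⟨q, hq⟩ := ih (a - φ q₀) (by
      simpa [hord, HasLeadingTerm] using sub_mem (S.hasLeadingTerm_lead_ord a) hq₀)
    exact ⟨q₀ + q, by rwa [map_add, ← sub_sub]⟩

theorem exists_sub_mul_mem_ordLT {b : R} (hb : b ≠ 0) (a : R) :
    ∃ q, a - q * b ∈ S.ordLT (S.ord b) :=
  S.exists_sub_mem_ordLT (AddMonoidHom.mulRight b) _ (fun a _ hle =>
    ⟨S.ι (S.lead a * (S.lead b)⁻¹) * S.dop ^ (S.ord a - S.ord b), by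
      have := (S.hasLeadingTerm_monomial (S.lead a * (S.lead b)⁻¹) (S.ord a - S.ord b)).mul
        (S.hasLeadingTerm_lead_ord b)
      rwa [inv_mul_cancel_right₀ (S.lead_ne_zero hb), Nat.sub_add_cancel hle] at this⟩) a

theorem exists_sub_mul_mem_ordLT' {b : R} (hb : b ≠ 0) (a : R) :
    ∃ q, a - b * q ∈ S.ordLT (S.ord b) :=
  S.exists_sub_mem_ordLT (AddMonoidHom.mulLeft b) _ (fun a _ hle =>
    ⟨S.ι ((S.lead b)⁻¹ * S.lead a) * S.dop ^ (S.ord a - S.ord b), by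
      have := (S.hasLeadingTerm_lead_ord b).mul
        (S.hasLeadingTerm_monomial ((S.lead b)⁻¹ * S.lead a) (S.ord a - S.ord b))
      rwa [mul_inv_cancel_left₀ (S.lead_ne_zero hb), Nat.add_sub_cancel' hle] at this⟩) a

include S in
/-- The right Ore condition, from the Euclidean algorithm. -/
theorem exists_mul_eq_mul {a : R} (ha : a ≠ 0) (c : R) : ∃ x y, y ≠ 0 ∧ a * x = c * y := by
  have := S.isDomain
  induction hn : S.ord a using Nat.strong_induction_on generalizing a c with
  | _ n ih =>
  obtain ⟨q, hq⟩ := S.exists_sub_mul_mem_ordLT' ha c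
  by_cases hr : c - a * q = 0
  · exact ⟨q, 1, one_ne_zero, by rw [mul_one, ← sub_eq_zero.mp hr]⟩
  obtain ⟨x, y, hy, hxy⟩ := ih _ (hn ▸ (S.mem_ordLT_iff hr).mp hq) hr a rfl
  refine ⟨q * x + y, x, ?_, ?_⟩
  · rintro rfl
    exact hy (by simpa [ha] using hxy.symm)
  · rw [mul_add, ← hxy, ← mul_assoc, ← add_mul, add_sub_cancel]

/-! ### The formal adjoint -/

noncomputable def adjHom : R →+ R :=
  AddMonoidHom.mk' S.adj fun r s => by
    simp only [adj, coeff_add]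
    exact Finsupp.sum_add_index' (fun _ => by simp) (fun _ _ _ => by rw [map_add, mul_add])

theorem adj_add (r s : R) : S.adj (r + s) = S.adj r + S.adj s := map_add S.adjHom r s

theorem adj_zero : S.adj 0 = 0 := map_zero S.adjHom

theorem adj_neg (r : R) : S.adj (-r) = -S.adj r := map_neg S.adjHom r

theorem adj_sum {α : Type*} (t : Finset α) (f : α → R) :
    S.adj (∑ i ∈ t, f i) = ∑ i ∈ t, S.adj (f i) :=
  map_sum S.adjHom f t

theorem adj_monomial (a : K) (i : ℕ) : S.adj (S.ι a * S.dop ^ i) = (-S.dop) ^ i * S.ι a := by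
  rw [adj, coeff_monomial, Finsupp.sum_single_index (by simp)]

theorem adj_iota (a : K) : S.adj (S.ι a) = S.ι a := by
  simpa using S.adj_monomial a 0

theorem adj_one : S.adj 1 = 1 := by
  simpa using S.adj_iota 1

theorem adj_dop : S.adj S.dop = -S.dop := by
  simpa using S.adj_monomial 1 1

theorem adj_mul_of_forall_monomial {x : R}
    (h : ∀ b j, S.adj (x * (S.ι b * S.dop ^ j)) = S.adj (S.ι b * S.dop ^ j) * S.adj x)
    (s : R) : S.adj (x * s) = S.adj s * S.adj x := by
  rw [S.eq_sum_of_mem_ordLT (S.hasLeadingTerm_lead_ord s).mem_ordLT_succ, Finset.mul_sum,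
    adj_sum, adj_sum, Finset.sum_mul]
  exact Finset.sum_congr rfl fun _ _ => h _ _

theorem adj_iota_mul (a : K) (s : R) : S.adj (S.ι a * s) = S.adj s * S.ι a := by
  refine (S.adj_mul_of_forall_monomial (fun b j => ?_) s).trans (by rw [adj_iota])
  rw [← mul_assoc, ← map_mul, adj_monomial, adj_monomial, adj_iota, mul_assoc, ← map_mul,
    mul_comm b]

theorem adj_dop_mul (s : R) : S.adj (S.dop * s) = S.adj s * -S.dop := by
  refine (S.adj_mul_of_forall_monomial (fun b j => ?_) s).trans (by rw [adj_dop])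
  have e : S.dop * (S.ι b * S.dop ^ j) = S.ι b * S.dop ^ (j + 1) + S.ι (d b) * S.dop ^ j := by
    rw [← mul_assoc, S.comm, pow_succ']
    noncomm_ring
  rw [e, adj_add, adj_monomial, adj_monomial, adj_monomial, adj_dop, pow_succ, mul_assoc _ (-S.dop),
    neg_mul S.dop, S.comm]
  noncomm_ring

theorem adj_monomial_mul (i : ℕ) :
    ∀ (a : K) (s : R), S.adj (S.ι a * S.dop ^ i * s) = S.adj s * S.adj (S.ι a * S.dop ^ i) := by
  induction i with
  | zero => simp [adj_iota_mul, adj_iota]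
  | succ i ih =>
    intro a s
    have e : S.ι a * S.dop ^ (i + 1) * s = S.ι a * S.dop ^ i * (S.dop * s) := by
      rw [pow_succ]; noncomm_ring
    rw [e, ih, adj_dop_mul, adj_monomial, adj_monomial, pow_succ']
    simp only [mul_assoc]

theorem adj_mul (r s : R) : S.adj (r * s) = S.adj s * S.adj r := by
  rw [S.eq_sum_of_mem_ordLT (S.hasLeadingTerm_lead_ord r).mem_ordLT_succ, Finset.sum_mul,
    adj_sum, adj_sum, Finset.mul_sum]
  exact Finset.sum_congr rfl fun _ _ => S.adj_monomial_mul _ _ _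

theorem adj_pow (r : R) (i : ℕ) : S.adj (r ^ i) = S.adj r ^ i := by
  induction i with
  | zero => rw [pow_zero, pow_zero, adj_one]
  | succ i ih => rw [pow_succ, adj_mul, ih, pow_succ']

theorem adj_adj (r : R) : S.adj (S.adj r) = r := by
  conv_rhs => rw [← S.ofCoeff_coeff r]
  show S.adj ((S.coeff r).sum fun i a => (-S.dop) ^ i * S.ι a) = _
  rw [Finsupp.sum, adj_sum, ofCoeff, Finsupp.sum]
  refine Finset.sum_congr rfl fun i _ => ?_
  rw [adj_mul, adj_iota, adj_pow, adj_neg, adj_dop, neg_neg]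

theorem hasLeadingTerm_adj_monomial (a : K) (i : ℕ) :
    S.HasLeadingTerm ((-S.dop) ^ i * S.ι a) ((-1) ^ i * a) i := by
  have := (S.hasLeadingTerm_monomial ((-1) ^ i) i).mul (S.hasLeadingTerm_monomial a 0)
  rw [neg_pow]
  rwa [pow_zero, mul_one, add_zero, map_pow, map_neg, map_one] at this

theorem adj_mem_ordLT {r : R} {k : ℕ} (hr : r ∈ S.ordLT k) : S.adj r ∈ S.ordLT k := by
  refine sum_mem fun i hi => S.ordLT_mono ?_ (S.hasLeadingTerm_adj_monomial _ i).mem_ordLT_succ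
  by_contra hik
  exact Finsupp.mem_support_iff.mp hi (hr i (by omega))

variable {S} in
theorem HasLeadingTerm.adj {r : R} {a : K} {n : ℕ} (h : S.HasLeadingTerm r a n) :
    S.HasLeadingTerm (S.adj r) ((-1) ^ n * a) n := by
  rw [← add_sub_cancel (S.ι a * S.dop ^ n) r, adj_add, adj_monomial]
  exact (S.hasLeadingTerm_adj_monomial a n).add_of_mem (S.adj_mem_ordLT h)

theorem neg_one_pow_ord_mul_lead_ne_zero {r : R} (hr : r ≠ 0) : (-1) ^ S.ord r * S.lead r ≠ 0 :=
  mul_ne_zero (pow_ne_zero _ (neg_ne_zero.mpr one_ne_zero)) (S.lead_ne_zero hr)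

theorem adj_ne_zero {r : R} (hr : r ≠ 0) : S.adj r ≠ 0 :=
  (S.hasLeadingTerm_lead_ord r).adj.ne_zero (S.neg_one_pow_ord_mul_lead_ne_zero hr)

theorem ord_adj {r : R} (hr : r ≠ 0) : S.ord (S.adj r) = S.ord r :=
  (S.hasLeadingTerm_lead_ord r).adj.ord_eq (S.neg_one_pow_ord_mul_lead_ne_zero hr)

theorem lead_adj {r : R} (hr : r ≠ 0) : S.lead (S.adj r) = (-1) ^ S.ord r * S.lead r :=
  (S.hasLeadingTerm_lead_ord r).adj.lead_eq (S.neg_one_pow_ord_mul_lead_ne_zero hr)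

theorem prod_lead_adj {α : Type*} [Fintype α] {v : α → R} (hv : ∀ i, v i ≠ 0) :
    ∏ i, S.lead (S.adj (v i)) = (-1) ^ (∑ i, (S.ord (v i) : ℤ)) * ∏ i, S.lead (v i) := by
  simp_rw [S.lead_adj (hv _), Finset.prod_mul_distrib, Finset.prod_pow_eq_pow_sum, ← Nat.cast_sum,
    zpow_natCast]

theorem sum_ord_adj {α : Type*} [Fintype α] {v : α → R} (hv : ∀ i, v i ≠ 0) :
    ∑ i, (S.ord (S.adj (v i)) : ℤ) = ∑ i, (S.ord (v i) : ℤ) := by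
  simp_rw [S.ord_adj (hv _)]

end DiffOpRing

/-! ### Triangular matrices -/

open Matrix

section Triangular

variable {R : Type} [Ring R] {m : ℕ}

theorem Nondeg.mul {A B : Matrix (Fin m) (Fin m) R} (hA : Nondeg A) (hB : Nondeg B) :
    Nondeg (A * B) :=
  fun X hX => hB X (hA _ (by rwa [mulVec_mulVec]))

theorem nondeg_of_mul_eq_one {A B : Matrix (Fin m) (Fin m) R} (h : B * A = 1) : Nondeg A :=
  fun X hX => by rw [← one_mulVec X, ← h, ← mulVec_mulVec, hX, mulVec_zero]

theorem Nondeg.exists_ne_zero [Nontrivial R] {A : Matrix (Fin m) (Fin m) R} (hA : Nondeg A)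
    (j : Fin m) : ∃ i, A i j ≠ 0 := by
  by_contra! h
  have := congrFun (hA (Pi.single j 1) (by ext i; simp [h])) j
  simp at this

theorem nondeg_of_blockTriangular [NoZeroDivisors R] {α : Type*} [LinearOrder α] [WellFoundedGT α]
    {b : Fin m → α} (hb : Function.Injective b) {T : Matrix (Fin m) (Fin m) R}
    (hT : T.BlockTriangular b) (hdiag : ∀ i, T i i ≠ 0) : Nondeg T := by
  intro X hX
  suffices h : ∀ a, ∀ i, b i = a → X i = 0 from funext fun i => h _ i rfl
  intro a
  induction a using WellFoundedGT.induction with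
  | _ a ih =>
  rintro i rfl
  have hrow := congrFun hX i
  rw [mulVec, dotProduct, Finset.sum_eq_single i (fun j _ hji => ?_) (by simp)] at hrow
  · exact (mul_eq_zero.mp hrow).resolve_left (hdiag i)
  · rcases (hb.ne hji).lt_or_gt with h | h
    · rw [hT h, zero_mul]
    · rw [ih _ h j rfl, mul_zero]

def IsNondegTriangular (T : Matrix (Fin m) (Fin m) R) : Prop :=
  (T.IsUpperTriangular ∨ T.IsLowerTriangular) ∧ ∀ i, T i i ≠ 0

theorem IsNondegTriangular.nondeg [NoZeroDivisors R] {T : Matrix (Fin m) (Fin m) R}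
    (hT : IsNondegTriangular T) : Nondeg T :=
  hT.1.elim (nondeg_of_blockTriangular Function.injective_id · hT.2)
    (nondeg_of_blockTriangular OrderDual.toDual.injective · hT.2)

theorem isNondegTriangular_one [Nontrivial R] : IsNondegTriangular (1 : Matrix (Fin m) (Fin m) R) :=
  ⟨Or.inl fun _ _ h => one_apply_ne h.ne', fun _ => by simp⟩

variable (R m) in
def revMatrix : Matrix (Fin m) (Fin m) R := (1 : Matrix (Fin m) (Fin m) R).submatrix Fin.rev id

theorem revMatrix_mul (A : Matrix (Fin m) (Fin m) R) :
    revMatrix R m * A = A.submatrix Fin.rev id := by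
  ext i j
  simp [revMatrix, mul_apply, one_apply]

theorem mul_revMatrix (A : Matrix (Fin m) (Fin m) R) :
    A * revMatrix R m = A.submatrix id Fin.rev := by
  ext i j
  simp only [revMatrix, mul_apply, submatrix_apply, one_apply, id, Fin.rev_eq_iff]
  simp

theorem revMatrix_mul_revMatrix : revMatrix R m * revMatrix R m = 1 := by
  rw [revMatrix_mul, revMatrix, submatrix_submatrix, Fin.rev_involutive.comp_self, Function.comp_id,
    submatrix_id_id]

/-- Conjugation by the reversal permutation matrix exchanges lower and upper triangular matrices. -/
theorem IsNondegTriangular.eq_prod_diag [IsDomain R] {M : Type*} [CommMonoid M]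
    (f : Matrix (Fin m) (Fin m) R → M) (g : R → M) (hg : g 1 = 1)
    (hmul : ∀ A B, Nondeg A → Nondeg B → f (A * B) = f A * f B)
    (hupper : ∀ T : Matrix (Fin m) (Fin m) R, (∀ i j : Fin m, j < i → T i j = 0) →
      (∀ i, T i i ≠ 0) → f T = ∏ i, g (T i i))
    {T : Matrix (Fin m) (Fin m) R} (hT : IsNondegTriangular T) : f T = ∏ i, g (T i i) := by
  obtain ⟨hupper' | hlower, hdiag⟩ := hT
  · exact hupper T (fun _ _ h => hupper' h) hdiag
  set J := revMatrix R m
  have hJ : Nondeg J := nondeg_of_mul_eq_one revMatrix_mul_revMatrix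
  have hTnd : Nondeg T := IsNondegTriangular.nondeg ⟨Or.inr hlower, hdiag⟩
  have hJJ : f J * f J = 1 := by
    rw [← hmul _ _ hJ hJ, revMatrix_mul_revMatrix,
      hupper 1 (fun _ _ h => one_apply_ne h.ne') (fun _ => by simp)]
    simp [hg]
  calc f T = f J * f J * f T := by rw [hJJ, one_mul]
    _ = f (J * T * J) := by rw [hmul _ _ (hJ.mul hTnd) hJ, hmul _ _ hJ hTnd, mul_right_comm]
    _ = ∏ i, g (T (Fin.rev i) (Fin.rev i)) := by
      rw [revMatrix_mul, mul_revMatrix]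
      exact hupper _ (fun i j h => hlower (by simpa using h)) (fun i => hdiag _)
    _ = ∏ i, g (T i i) := Equiv.prod_comp Fin.revPerm (fun i => g (T i i))

end Triangular

theorem IsNondegTriangular.eq_sum_diag {R : Type} [Ring R] [IsDomain R] {m : ℕ} {M : Type*}
    [AddCommMonoid M] (f : Matrix (Fin m) (Fin m) R → M) (g : R → M) (hg : g 1 = 0)
    (hadd : ∀ A B, Nondeg A → Nondeg B → f (A * B) = f A + f B)
    (hupper : ∀ T : Matrix (Fin m) (Fin m) R, (∀ i j : Fin m, j < i → T i j = 0) →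
      (∀ i, T i i ≠ 0) → f T = ∑ i, g (T i i))
    {T : Matrix (Fin m) (Fin m) R} (hT : IsNondegTriangular T) : f T = ∑ i, g (T i i) := by
  apply Multiplicative.ofAdd.injective
  rw [ofAdd_sum]
  exact hT.eq_prod_diag (M := Multiplicative M) (fun A => .ofAdd (f A)) (fun r => .ofAdd (g r))
    (by simp [hg]) (fun A B hA hB => by simp [hadd A B hA hB])
    (fun T h1 h2 => by simp [hupper T h1 h2, ofAdd_sum])

section Adjoint

variable {K : Type} [Field K] {d : K → K} {R : Type} [Ring R] (S : DiffOpRing K d R) {m : ℕ}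

theorem adjM_apply (A : Matrix (Fin m) (Fin m) R) (i j : Fin m) :
    adjM S A i j = S.adj (A j i) := rfl

theorem adjM_mul (A B : Matrix (Fin m) (Fin m) R) : adjM S (A * B) = adjM S B * adjM S A := by
  ext i j
  simp only [adjM_apply, mul_apply, S.adj_sum, S.adj_mul]

theorem adjM_adjM (A : Matrix (Fin m) (Fin m) R) : adjM S (adjM S A) = A := by
  ext i j
  rw [adjM_apply, adjM_apply, S.adj_adj]

variable {S} in
theorem IsNondegTriangular.adjM {T : Matrix (Fin m) (Fin m) R} (hT : IsNondegTriangular T) :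
    IsNondegTriangular (adjM S T) := by
  refine ⟨hT.1.symm.imp (fun h i j hij => ?_) (fun h i j hij => ?_),
    fun i => S.adj_ne_zero (hT.2 i)⟩
  · rw [adjM_apply, h (show OrderDual.toDual i < OrderDual.toDual j from hij), S.adj_zero]
  · rw [adjM_apply, h (show i < j from hij), S.adj_zero]

end Adjoint

/-! ### Gaussian elimination -/

section Elimination

variable {R : Type} [Ring R] {m : ℕ}

def elemMatrix (i j : Fin m) (c : R) : Matrix (Fin m) (Fin m) R := 1 + single i j c

theorem elemMatrix_mul_apply (i j : Fin m) (c : R) (A : Matrix (Fin m) (Fin m) R) (k l : Fin m) :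
    (elemMatrix i j c * A) k l = if k = i then A i l + c * A j l else A k l := by
  split_ifs with h
  · subst h; simp [elemMatrix, add_mul]
  · simp [elemMatrix, add_mul, h]

theorem elemMatrix_neg_mul_elemMatrix {i j : Fin m} (hij : i ≠ j) (c : R) :
    elemMatrix i j (-c) * elemMatrix i j c = 1 := by
  simp [elemMatrix, add_mul, mul_add, single_mul_single_of_ne _ _ _ _ hij.symm, add_assoc,
    ← single_add]

theorem isNondegTriangular_elemMatrix [Nontrivial R] {i j : Fin m} (hij : i ≠ j) (c : R) :
    IsNondegTriangular (elemMatrix i j c) := by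
  refine ⟨hij.lt_or_gt.imp (fun h k l (hlk : l < k) => ?_) (fun h k l (hlk : k < l) => ?_),
    fun k => ?_⟩
  · rw [elemMatrix, Matrix.add_apply, one_apply_ne hlk.ne', single_apply,
      if_neg (by rintro ⟨rfl, rfl⟩; exact lt_asymm h hlk), add_zero]
  · rw [elemMatrix, Matrix.add_apply, one_apply_ne hlk.ne, single_apply,
      if_neg (by rintro ⟨rfl, rfl⟩; exact lt_asymm h hlk), add_zero]
  · rw [elemMatrix, Matrix.add_apply, one_apply_eq, single_apply,
      if_neg (by rintro ⟨rfl, rfl⟩; exact hij rfl), add_zero]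
    exact one_ne_zero

variable (R m) in
def triangularClosure : Submonoid (Matrix (Fin m) (Fin m) R) :=
  Submonoid.closure {T | IsNondegTriangular T}

theorem nondeg_of_mem_triangularClosure [NoZeroDivisors R] {A : Matrix (Fin m) (Fin m) R}
    (hA : A ∈ triangularClosure R m) : Nondeg A := by
  induction hA using Submonoid.closure_induction with
  | mem T hT => exact IsNondegTriangular.nondeg hT
  | one => exact nondeg_of_mul_eq_one (mul_one 1)
  | mul A B _ _ hA hB => exact hA.mul hB

theorem mem_triangularClosure_of_elemMatrix_mul [Nontrivial R] {i j : Fin m} (hij : i ≠ j) {c : R}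
    {A : Matrix (Fin m) (Fin m) R} (h : elemMatrix i j c * A ∈ triangularClosure R m) :
    A ∈ triangularClosure R m := by
  rw [← one_mul A, ← elemMatrix_neg_mul_elemMatrix hij c, mul_assoc]
  exact mul_mem (Submonoid.subset_closure (isNondegTriangular_elemMatrix hij _)) h

variable (R m) in
def blockDiagOne : Matrix (Fin m) (Fin m) R →* Matrix (Fin (m + 1)) (Fin (m + 1)) R where
  toFun B := Matrix.of (Fin.cons (Pi.single 0 1) fun i => Fin.cons 0 (B i))
  map_one' := by
    ext i j
    induction i using Fin.cases <;> induction j using Fin.cases <;>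
      simp [one_apply, eq_comm (a := (0 : Fin (m + 1)))]
  map_mul' A B := by
    ext i j
    induction i using Fin.cases <;> induction j using Fin.cases <;>
      simp [mul_apply, Fin.sum_univ_succ]

theorem blockDiagOne_apply (B : Matrix (Fin m) (Fin m) R) :
    blockDiagOne R m B = Matrix.of (Fin.cons (Pi.single 0 1) fun i => Fin.cons 0 (B i)) :=
  rfl

theorem IsNondegTriangular.blockDiagOne [Nontrivial R] {B : Matrix (Fin m) (Fin m) R}
    (hB : IsNondegTriangular B) : IsNondegTriangular (blockDiagOne R m B) := by
  refine ⟨hB.1.imp (fun h i j (hij : j < i) => ?_) (fun h i j (hij : i < j) => ?_), fun i => ?_⟩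
  · induction i using Fin.cases <;> induction j using Fin.cases <;>
      simp_all [blockDiagOne_apply, Fin.succ_lt_succ_iff]
    exact h ‹_›
  · induction i using Fin.cases <;> induction j using Fin.cases <;>
      simp_all [blockDiagOne_apply, Fin.succ_lt_succ_iff]
    exact h ‹_›
  · induction i using Fin.cases <;> simp [blockDiagOne_apply, hB.2]

theorem blockDiagOne_mem_triangularClosure [Nontrivial R] {B : Matrix (Fin m) (Fin m) R}
    (hB : B ∈ triangularClosure R m) : blockDiagOne R m B ∈ triangularClosure R (m + 1) :=
  (Submonoid.closure_le (S := (triangularClosure R (m + 1)).comap (blockDiagOne R m))).mpr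
    (fun _ hT => Submonoid.subset_closure (IsNondegTriangular.blockDiagOne hT)) hB

theorem Nondeg.apply_zero_zero_ne_zero [Nontrivial R] {A : Matrix (Fin (m + 1)) (Fin (m + 1)) R}
    (hA : Nondeg A) (hcol : ∀ i, i ≠ 0 → A i 0 = 0) : A 0 0 ≠ 0 := by
  obtain ⟨i, hi⟩ := hA.exists_ne_zero 0
  rcases eq_or_ne i 0 with rfl | h
  · exact hi
  · exact absurd (hcol i h) hi

theorem eq_blockDiagOne_mul_updateRow {A : Matrix (Fin (m + 1)) (Fin (m + 1)) R}
    (hcol : ∀ i, i ≠ 0 → A i 0 = 0) :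
    A = blockDiagOne R m (A.submatrix Fin.succ Fin.succ) *
      (1 : Matrix _ _ R).updateRow 0 (A 0) := by
  ext i j
  induction i using Fin.cases <;> induction j using Fin.cases <;>
    simp [blockDiagOne_apply, mul_apply, Fin.sum_univ_succ, updateRow_apply, one_apply, hcol]

theorem isNondegTriangular_updateRow_one [Nontrivial R] {v : Fin (m + 1) → R} (hv : v 0 ≠ 0) :
    IsNondegTriangular ((1 : Matrix (Fin (m + 1)) (Fin (m + 1)) R).updateRow 0 v) := by
  refine ⟨Or.inl fun i j (hij : j < i) => ?_, fun i => ?_⟩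
  · rw [updateRow_apply, if_neg ((Fin.zero_le j).trans_lt hij).ne', one_apply_ne hij.ne']
  · rcases eq_or_ne i 0 with rfl | hi
    · simpa using hv
    · simp [updateRow_apply, hi]

end Elimination

namespace DiffOpRing

variable {K : Type} [Field K] {d : K → K} {R : Type} [Ring R] (S : DiffOpRing K d R) {m : ℕ}

include S in
/-- Uses the Ore condition: a kernel vector `X` of the lower block extends, after scaling on the
right, to a kernel vector of `A`. -/
theorem nondeg_submatrix_succ {A : Matrix (Fin (m + 1)) (Fin (m + 1)) R} (hA : Nondeg A)
    (hcol : ∀ i, i ≠ 0 → A i 0 = 0) : Nondeg (A.submatrix Fin.succ Fin.succ) := by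
  have := S.isDomain
  intro X hX
  obtain ⟨x, y, hy, hxy⟩ :=
    S.exists_mul_eq_mul (hA.apply_zero_zero_ne_zero hcol) (∑ j, A 0 j.succ * X j)
  have hY : A *ᵥ Fin.cons (-x) (fun j => X j * y) = 0 := by
    ext i
    induction i using Fin.cases with
    | zero => simp [mulVec, dotProduct, Fin.sum_univ_succ, hxy, Finset.sum_mul, mul_assoc]
    | succ i =>
      have := congrFun hX i
      simp only [mulVec, dotProduct, submatrix_apply, Pi.zero_apply] at this
      simp [mulVec, dotProduct, Fin.sum_univ_succ, hcol, ← mul_assoc, ← Finset.sum_mul, this]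
  funext j
  simpa [hy] using congrFun (hA _ hY) j.succ

include S in
theorem mem_triangularClosure_of_col_eq_zero
    (IH : ∀ B : Matrix (Fin m) (Fin m) R, Nondeg B → B ∈ triangularClosure R m)
    {A : Matrix (Fin (m + 1)) (Fin (m + 1)) R} (hA : Nondeg A) (hcol : ∀ i, i ≠ 0 → A i 0 = 0) :
    A ∈ triangularClosure R (m + 1) := by
  have := S.isDomain
  rw [eq_blockDiagOne_mul_updateRow hcol]
  exact mul_mem (blockDiagOne_mem_triangularClosure (IH _ (S.nondeg_submatrix_succ hA hcol)))
    (Submonoid.subset_closure (isNondegTriangular_updateRow_one (hA.apply_zero_zero_ne_zero hcol)))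

include S in
theorem mem_triangularClosure_of_col_eq_single
    (IH : ∀ B : Matrix (Fin m) (Fin m) R, Nondeg B → B ∈ triangularClosure R m)
    {A : Matrix (Fin (m + 1)) (Fin (m + 1)) R} (hA : Nondeg A) {p : Fin (m + 1)}
    (hcol : ∀ i, i ≠ p → A i 0 = 0) : A ∈ triangularClosure R (m + 1) := by
  have := S.isDomain
  rcases eq_or_ne p 0 with rfl | hp
  · exact S.mem_triangularClosure_of_col_eq_zero IH hA hcol
  -- add row `p` to row `0`, then subtract row `0` from row `p`
  refine mem_triangularClosure_of_elemMatrix_mul hp.symm (c := 1)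
    (mem_triangularClosure_of_elemMatrix_mul hp (c := -1) ?_)
  refine S.mem_triangularClosure_of_col_eq_zero IH ((isNondegTriangular_elemMatrix hp _).nondeg.mul
    ((isNondegTriangular_elemMatrix hp.symm _).nondeg.mul hA)) fun i hi => ?_
  have h0 := hcol 0 hp.symm
  simp only [elemMatrix_mul_apply]
  split_ifs <;> simp_all

open Classical in
noncomputable def weight (r : R) : ℕ := if r = 0 then 0 else S.ord r + 1

theorem weight_lt {a r : R} {n : ℕ} (ha : a ≠ 0) (hr : r ∈ S.ordLT n) (hn : n ≤ S.ord a) :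
    S.weight r < S.weight a := by
  rw [weight, weight, if_neg ha]
  split_ifs with h
  · omega
  · have := (S.mem_ordLT_iff h).mp hr
    omega

include S in
/-- Euclid's algorithm on the first column: the total weight of its entries decreases until at
most one entry is nonzero. -/
theorem mem_triangularClosure_succ
    (IH : ∀ B : Matrix (Fin m) (Fin m) R, Nondeg B → B ∈ triangularClosure R m)
    (A : Matrix (Fin (m + 1)) (Fin (m + 1)) R) (hA : Nondeg A) :
    A ∈ triangularClosure R (m + 1) := by
  have := S.isDomain
  induction hw : ∑ k, S.weight (A k 0) using Nat.strong_induction_on generalizing A with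
  | _ w ih =>
  by_cases hpair : ∃ i j, i ≠ j ∧ A i 0 ≠ 0 ∧ A j 0 ≠ 0
  · obtain ⟨i, j, hij, hi, hj⟩ := hpair
    wlog hle : S.ord (A j 0) ≤ S.ord (A i 0) generalizing i j
    · exact this j i hij.symm hj hi (le_of_not_ge hle)
    obtain ⟨q, hq⟩ := S.exists_sub_mul_mem_ordLT hj (A i 0)
    refine mem_triangularClosure_of_elemMatrix_mul hij (c := -q)
      (ih _ ?_ _ ((isNondegTriangular_elemMatrix hij _).nondeg.mul hA) rfl)
    rw [← hw]
    refine Finset.sum_lt_sum (fun k _ => ?_) ⟨i, Finset.mem_univ _, ?_⟩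
    · rw [elemMatrix_mul_apply]
      split_ifs with hk
      · subst hk
        rw [neg_mul, ← sub_eq_add_neg]
        exact (S.weight_lt hi hq hle).le
      · exact le_rfl
    · rw [elemMatrix_mul_apply, if_pos rfl, neg_mul, ← sub_eq_add_neg]
      exact S.weight_lt hi hq hle
  · push Not at hpair
    obtain ⟨p, hp⟩ := hA.exists_ne_zero 0
    exact S.mem_triangularClosure_of_col_eq_single IH hA fun i hi =>
      by_contra fun h => hp (hpair i p hi h)

include S in
theorem mem_triangularClosure_of_nondeg :
    ∀ {m : ℕ} {A : Matrix (Fin m) (Fin m) R}, Nondeg A → A ∈ triangularClosure R m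
  | 0, A, _ => by
    rw [Subsingleton.elim A 1]
    exact one_mem _
  | _ + 1, A, hA =>
    S.mem_triangularClosure_succ (fun _ hB => mem_triangularClosure_of_nondeg hB) A hA

end DiffOpRing

theorem stmt_15_general (K : Type) [Field K] (d : K → K)
    (R : Type) [Ring R] (S : DiffOpRing K d R)
    (n : ℕ) (det1 : Matrix (Fin n) (Fin n) R → K) (deg : Matrix (Fin n) (Fin n) R → ℤ)
    (hdet1_mul : ∀ A B : Matrix (Fin n) (Fin n) R, Nondeg A → Nondeg B →
      det1 (A * B) = det1 A * det1 B)
    (hdeg_mul : ∀ A B : Matrix (Fin n) (Fin n) R, Nondeg A → Nondeg B →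
      deg (A * B) = deg A + deg B)
    (hdet1_tri : ∀ T : Matrix (Fin n) (Fin n) R, (∀ i j : Fin n, j < i → T i j = 0) →
      (∀ i, T i i ≠ 0) → det1 T = ∏ i, S.lead (T i i))
    (hdeg_tri : ∀ T : Matrix (Fin n) (Fin n) R, (∀ i j : Fin n, j < i → T i j = 0) →
      (∀ i, T i i ≠ 0) → deg T = ∑ i, (S.ord (T i i) : ℤ))
    (A : Matrix (Fin n) (Fin n) R) :
    (¬ Nondeg A → ¬ Nondeg (adjM S A)) ∧
    (Nondeg A → Nondeg (adjM S A) ∧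
      det1 (adjM S A) = (-1 : K) ^ (deg A) * det1 A ∧ deg (adjM S A) = deg A) := by
  have := S.isDomain
  have hdet1 {T : Matrix (Fin n) (Fin n) R} (hT : IsNondegTriangular T) :=
    hT.eq_prod_diag det1 S.lead S.lead_one hdet1_mul hdet1_tri
  have hdeg {T : Matrix (Fin n) (Fin n) R} (hT : IsNondegTriangular T) :=
    hT.eq_sum_diag deg (fun r => (S.ord r : ℤ)) (by simp [S.ord_one]) hdeg_mul hdeg_tri
  have htri {T : Matrix (Fin n) (Fin n) R} (hT : IsNondegTriangular T) :
      Nondeg (adjM S T) ∧ det1 (adjM S T) = (-1 : K) ^ deg T * det1 T ∧ deg (adjM S T) = deg T :=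
    ⟨hT.adjM.nondeg, by rw [hdet1 hT.adjM, hdet1 hT, hdeg hT]; exact S.prod_lead_adj hT.2,
      by rw [hdeg hT.adjM, hdeg hT]; exact S.sum_ord_adj hT.2⟩
  have key {B : Matrix (Fin n) (Fin n) R} (hB : B ∈ triangularClosure R n) :
      Nondeg (adjM S B) ∧ det1 (adjM S B) = (-1 : K) ^ deg B * det1 B ∧ deg (adjM S B) = deg B := by
    induction hB using Submonoid.closure_induction with
    | mem T hT => exact htri hT
    | one => exact htri isNondegTriangular_one
    | mul X Y hX hY ihX ihY =>
      have hX' := nondeg_of_mem_triangularClosure hX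
      have hY' := nondeg_of_mem_triangularClosure hY
      rw [adjM_mul, hdet1_mul _ _ ihY.1 ihX.1, hdeg_mul _ _ ihY.1 ihX.1, hdet1_mul _ _ hX' hY',
        hdeg_mul _ _ hX' hY', ihX.2.1, ihY.2.1, ihX.2.2, ihY.2.2, zpow_add₀ (by norm_num)]
      exact ⟨ihY.1.mul ihX.1, by ring, add_comm _ _⟩
  refine ⟨fun hA hA' => hA ?_, fun hA => key (S.mem_triangularClosure_of_nondeg hA)⟩
  simpa only [adjM_adjM] using (key (S.mem_triangularClosure_of_nondeg hA')).1

/-- Let K be a differential field of characteristic 0 and A a matrix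
(pseudo)differential operator with adjoint A*. If det(A) = 0 then det(A*) = 0, and if
det(A) ≠ 0 then det(A*) = (-1)^{d(A)} det(A). Here the Dieudonné determinant
det = det₁ · λ^{deg} is described abstractly by its characterizing properties:
det₁ and deg are multiplicative on non-degenerate matrices, and on an upper triangular
matrix with non-zero diagonal entries det₁ is the product of the leading coefficients
of the diagonal entries and deg is the sum of their orders; det(A) = 0 means that A is
degenerate. -/
theorem stmt_15 (K : Type) [Field K] [CharZero K] (d : K → K)
    (hd_add : ∀ a b : K, d (a + b) = d a + d b)
    (hd_mul : ∀ a b : K, d (a * b) = a * d b + d a * b)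
    (R : Type) [Ring R] (S : DiffOpRing K d R)
    (n : ℕ) (det1 : Matrix (Fin n) (Fin n) R → K) (deg : Matrix (Fin n) (Fin n) R → ℤ)
    (hdet1_mul : ∀ A B : Matrix (Fin n) (Fin n) R, Nondeg A → Nondeg B →
      det1 (A * B) = det1 A * det1 B)
    (hdeg_mul : ∀ A B : Matrix (Fin n) (Fin n) R, Nondeg A → Nondeg B →
      deg (A * B) = deg A + deg B)
    (hdet1_tri : ∀ T : Matrix (Fin n) (Fin n) R, (∀ i j : Fin n, j < i → T i j = 0) →
      (∀ i, T i i ≠ 0) → det1 T = ∏ i, S.lead (T i i))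
    (hdeg_tri : ∀ T : Matrix (Fin n) (Fin n) R, (∀ i j : Fin n, j < i → T i j = 0) →
      (∀ i, T i i ≠ 0) → deg T = ∑ i, (S.ord (T i i) : ℤ))
    (A : Matrix (Fin n) (Fin n) R) :
    (¬ Nondeg A → ¬ Nondeg (adjM S A)) ∧
    (Nondeg A → Nondeg (adjM S A) ∧
      det1 (adjM S A) = (-1 : K) ^ (deg A) * det1 A ∧ deg (adjM S A) = deg A) :=
  stmt_15_general K d R S n det1 deg hdet1_mul hdeg_mul hdet1_tri hdeg_tri A
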